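/- arXiv:2503.08142 — 2 statements merged into one kernel-verified Lean document; each statement's English description precedes it below -/
import Mathlib

section
/- Let F be a real 3×3 matrix with det F = 0 and with F₂ₓ₂ invertible. Then Q(F) has rank exactly 4, and Q(F)·(k(F); 1) = 0; that is, the kernel of Q(F) is spanned by the vector (k(F); 1) ∈ ℝ⁵. -/
open Matrix

/-- The top-left 2×2 block of a 3×3 matrix. -/
def F22 (F : Matrix (Fin 3) (Fin 3) ℝ) : Matrix (Fin 2) (Fin 2) ℝ :=
  !![F 0 0, F 0 1; F 1 0, F 1 1]

/-- The symmetric 5×5 matrix Q(F) = (1/2)·[0, F₂ₓ₂, F_h; F₂ₓ₂ᵀ, 0, F_vᵀ; F_hᵀ, F_v, 2F₃₃]. -/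
noncomputable def Qmat (F : Matrix (Fin 3) (Fin 3) ℝ) : Matrix (Fin 5) (Fin 5) ℝ :=
  (1 / 2 : ℝ) •
    !![0,      0,      F 0 0, F 0 1, F 0 2;
       0,      0,      F 1 0, F 1 1, F 1 2;
       F 0 0,  F 1 0,  0,     0,     F 2 0;
       F 0 1,  F 1 1,  0,     0,     F 2 1;
       F 0 2,  F 1 2,  F 2 0, F 2 1, 2 * F 2 2]

/-- k(F) = (−F₂ₓ₂⁻ᵀ F_vᵀ, −F₂ₓ₂⁻¹ F_h) ∈ ℝ⁴. -/
noncomputable def kvec (F : Matrix (Fin 3) (Fin 3) ℝ) : Fin 4 → ℝ :=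
  ![(-(((F22 F)ᵀ)⁻¹.mulVec ![F 2 0, F 2 1])) 0,
    (-(((F22 F)ᵀ)⁻¹.mulVec ![F 2 0, F 2 1])) 1,
    (-((F22 F)⁻¹.mulVec ![F 0 2, F 1 2])) 0,
    (-((F22 F)⁻¹.mulVec ![F 0 2, F 1 2])) 1]

/-- The vector (k(F); 1) ∈ ℝ⁵. -/
noncomputable def kvec1 (F : Matrix (Fin 3) (Fin 3) ℝ) : Fin 5 → ℝ :=
  ![kvec F 0, kvec F 1, kvec F 2, kvec F 3, 1]

set_option maxHeartbeats 2000000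

/-- for a fundamental matrix F (det F = 0) with F₂ₓ₂ invertible, Q(F) has
rank exactly 4 and its kernel is spanned by (k(F); 1). -/
theorem rank_Qmat_eq_four_and_kernel (F : Matrix (Fin 3) (Fin 3) ℝ)
    (hdet : F.det = 0) (hinv : IsUnit (F22 F).det) :
    (Qmat F).rank = 4 ∧ (Qmat F).mulVec (kvec1 F) = 0 ∧
      ∀ w : Fin 5 → ℝ, (Qmat F).mulVec w = 0 → ∃ c : ℝ, w = c • kvec1 F := by
  have hd : F 0 0 * F 1 1 - F 0 1 * F 1 0 ≠ 0 := by
    have := hinv.ne_zero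
    simpa [F22, Matrix.det_fin_two_of] using this
  have hdA : F 0 0 * F 1 1 - F 1 0 * F 0 1 ≠ 0 := by intro h; apply hd; linarith
  have hdB : -(F 1 0 * F 0 1) + F 1 1 * F 0 0 ≠ 0 := by intro h; apply hd; linarith
  have hdC : -(F 0 1 * F 1 0) + F 0 0 * F 1 1 ≠ 0 := by intro h; apply hd; linarith
  have hdD : -(F 0 1 * F 1 0) + F 1 1 * F 0 0 ≠ 0 := by intro h; apply hd; linarith
  have hdE : -(F 1 0 * F 0 1) + F 0 0 * F 1 1 ≠ 0 := by intro h; apply hd; linarith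
  have hdF : F 1 1 * F 0 0 - F 1 0 * F 0 1 ≠ 0 := by intro h; apply hd; linarith
  have hdG : F 1 1 * F 0 0 - F 0 1 * F 1 0 ≠ 0 := by intro h; apply hd; linarith
  have hD : F 0 0 * (F 1 1 * F 2 2) - F 0 0 * (F 1 2 * F 2 1) - F 0 1 * (F 1 0 * F 2 2)
      + F 0 1 * (F 1 2 * F 2 0) + F 0 2 * (F 1 0 * F 2 1) - F 0 2 * (F 1 1 * F 2 0) = 0 := by
    have h := hdet
    rw [Matrix.det_fin_three] at h
    linarith [h]
  have ek0 : kvec F 0 = (F 1 0 * F 2 1 - F 1 1 * F 2 0) / (F 0 0 * F 1 1 - F 0 1 * F 1 0) := by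
    simp [kvec, F22, Matrix.inv_def, Matrix.adjugate_fin_two, Matrix.mulVec, dotProduct,
      Fin.sum_univ_two, Ring.inverse_eq_inv', Matrix.det_fin_two, Matrix.transpose]
    field_simp
    ring
  have ek1 : kvec F 1 = (F 0 1 * F 2 0 - F 0 0 * F 2 1) / (F 0 0 * F 1 1 - F 0 1 * F 1 0) := by
    simp [kvec, F22, Matrix.inv_def, Matrix.adjugate_fin_two, Matrix.mulVec, dotProduct,
      Fin.sum_univ_two, Ring.inverse_eq_inv', Matrix.det_fin_two, Matrix.transpose]
    field_simp
    ring
  have ek2 : kvec F 2 = (F 0 1 * F 1 2 - F 1 1 * F 0 2) / (F 0 0 * F 1 1 - F 0 1 * F 1 0) := by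
    simp [kvec, F22, Matrix.inv_def, Matrix.adjugate_fin_two, Matrix.mulVec, dotProduct,
      Fin.sum_univ_two, Ring.inverse_eq_inv', Matrix.det_fin_two, Matrix.transpose]
    field_simp
    ring
  have ek3 : kvec F 3 = (F 1 0 * F 0 2 - F 0 0 * F 1 2) / (F 0 0 * F 1 1 - F 0 1 * F 1 0) := by
    simp [kvec, F22, Matrix.inv_def, Matrix.adjugate_fin_two, Matrix.mulVec, dotProduct,
      Fin.sum_univ_two, Ring.inverse_eq_inv', Matrix.det_fin_two, Matrix.transpose]
    field_simp
    ring
  have hmul : (Qmat F).mulVec (kvec1 F) = 0 := by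
    funext i
    fin_cases i
    · simp [Qmat, kvec1, Matrix.mulVec, dotProduct, Fin.sum_univ_five,
        ek0, ek1, ek2, ek3]
      field_simp
      ring
    · simp [Qmat, kvec1, Matrix.mulVec, dotProduct, Fin.sum_univ_five,
        ek0, ek1, ek2, ek3]
      field_simp
      ring
    · simp [Qmat, kvec1, Matrix.mulVec, dotProduct, Fin.sum_univ_five,
        ek0, ek1, ek2, ek3]
      field_simp
      ring
    · simp [Qmat, kvec1, Matrix.mulVec, dotProduct, Fin.sum_univ_five,
        ek0, ek1, ek2, ek3]
      field_simp
      ring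
    · simp [Qmat, kvec1, Matrix.mulVec, dotProduct, Fin.sum_univ_five,
        ek0, ek1, ek2, ek3]
      field_simp
      linear_combination 2 * hD
  have hker : ∀ w : Fin 5 → ℝ, (Qmat F).mulVec w = 0 → ∃ c : ℝ, w = c • kvec1 F := by
    intro w hw
    have e0 := congrFun hw 0
    have e1 := congrFun hw 1
    have e2 := congrFun hw 2
    have e3 := congrFun hw 3
    simp [Qmat, Matrix.mulVec, dotProduct, Fin.sum_univ_five] at e0 e1 e2 e3
    refine ⟨w 4, ?_⟩
    funext i
    fin_cases i
    · simp [kvec1, ek0]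
      field_simp
      linear_combination (F 1 1 * 2) * e2 - (F 1 0 * 2) * e3
    · simp [kvec1, ek1]
      field_simp
      linear_combination (F 0 0 * 2) * e3 - (F 0 1 * 2) * e2
    · simp [kvec1, ek2]
      field_simp
      linear_combination (F 1 1 * 2) * e0 - (F 0 1 * 2) * e1
    · simp [kvec1, ek3]
      field_simp
      linear_combination (F 0 0 * 2) * e1 - (F 1 0 * 2) * e0
    · simp [kvec1]
  refine ⟨?_, hmul, hker⟩
  have hne : kvec1 F ≠ 0 := by
    intro h
    have := congrFun h 4
    simp [kvec1] at this
  have hkereq : LinearMap.ker (Matrix.mulVecLin (Qmat F)) = Submodule.span ℝ {kvec1 F} := by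
    ext v
    simp only [LinearMap.mem_ker, Matrix.mulVecLin_apply, Submodule.mem_span_singleton]
    constructor
    · intro hv
      obtain ⟨c, hc⟩ := hker v hv
      exact ⟨c, hc.symm⟩
    · rintro ⟨c, rfl⟩
      rw [Matrix.mulVec_smul, hmul, smul_zero]
  have hrn := LinearMap.finrank_range_add_finrank_ker (Matrix.mulVecLin (Qmat F))
  rw [hkereq, finrank_span_singleton hne] at hrn
  have h5 : Module.finrank ℝ (Fin 5 → ℝ) = 5 := by simp
  rw [h5] at hrn
  rw [Matrix.rank]
  omega
end

section
/- Let F be a real 3×3 matrix with det F = 0 and with F₂ₓ₂ invertible. Then for every x ∈ ℝ⁴, (x; 1)ᵀ Q(F) (x; 1) = (x − k(F))ᵀ P(F) (x − k(F)), where (x; 1) ∈ ℝ⁵ appends a 1 to x. -/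
open Matrix

/-- P(F): the top-left 4×4 block of Q(F). -/
noncomputable def Pmat (F : Matrix (Fin 3) (Fin 3) ℝ) : Matrix (Fin 4) (Fin 4) ℝ :=
  fun i j => Qmat F i.castSucc j.castSucc

lemma inv2 (A : Matrix (Fin 2) (Fin 2) ℝ) :
    A⁻¹ = (A.det)⁻¹ • !![A 1 1, -(A 0 1); -(A 1 0), A 0 0] := by
  rw [Matrix.inv_def, Matrix.adjugate_fin_two, Ring.inverse_eq_inv']

lemma Pmat_eq (F : Matrix (Fin 3) (Fin 3) ℝ) :
    Pmat F = (1/2 : ℝ) • !![0, 0, F 0 0, F 0 1; 0, 0, F 1 0, F 1 1;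
      F 0 0, F 1 0, 0, 0; F 0 1, F 1 1, 0, 0] := by
  ext i j
  fin_cases i <;> fin_cases j <;>
    simp [Pmat, Qmat, show (Fin.castSucc 0 : Fin 5) = 0 by rfl,
      show (Fin.castSucc 1 : Fin 5) = 1 by rfl, show (Fin.castSucc 2 : Fin 5) = 2 by rfl,
      show (Fin.castSucc 3 : Fin 5) = 3 by rfl, Matrix.vecHead, Matrix.vecTail]

lemma kvec_eq (F : Matrix (Fin 3) (Fin 3) ℝ) :
    kvec F = ![-(F 1 1 * F 2 0 - F 1 0 * F 2 1) / (F 0 0 * F 1 1 - F 0 1 * F 1 0),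
      -(F 0 0 * F 2 1 - F 0 1 * F 2 0) / (F 0 0 * F 1 1 - F 0 1 * F 1 0),
      -(F 1 1 * F 0 2 - F 0 1 * F 1 2) / (F 0 0 * F 1 1 - F 0 1 * F 1 0),
      -(F 0 0 * F 1 2 - F 1 0 * F 0 2) / (F 0 0 * F 1 1 - F 0 1 * F 1 0)] := by
  have ht : (F22 F)ᵀ = !![F 0 0, F 1 0; F 0 1, F 1 1] := by
    ext i j; fin_cases i <;> fin_cases j <;> rfl
  have h1 : ((F22 F)ᵀ)⁻¹.mulVec ![F 2 0, F 2 1] =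
      ![(F 1 1 * F 2 0 - F 1 0 * F 2 1) / (F 0 0 * F 1 1 - F 0 1 * F 1 0),
        (F 0 0 * F 2 1 - F 0 1 * F 2 0) / (F 0 0 * F 1 1 - F 0 1 * F 1 0)] := by
    rw [ht, inv2]
    ext i
    fin_cases i <;>
      simp [Matrix.mulVec, dotProduct, Fin.sum_univ_two, Matrix.det_fin_two,
        div_eq_inv_mul] <;> ring
  have h2 : (F22 F)⁻¹.mulVec ![F 0 2, F 1 2] =
      ![(F 1 1 * F 0 2 - F 0 1 * F 1 2) / (F 0 0 * F 1 1 - F 0 1 * F 1 0),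
        (F 0 0 * F 1 2 - F 1 0 * F 0 2) / (F 0 0 * F 1 1 - F 0 1 * F 1 0)] := by
    rw [show F22 F = !![F 0 0, F 0 1; F 1 0, F 1 1] from rfl, inv2]
    ext i
    fin_cases i <;>
      simp [Matrix.mulVec, dotProduct, Fin.sum_univ_two, Matrix.det_fin_two,
        div_eq_inv_mul] <;> ring
  ext i
  fin_cases i <;> simp [kvec, h1, h2] <;> ring

set_option maxHeartbeats 1000000 in
/-- for a fundamental matrix F (det F = 0) with F₂ₓ₂ invertible,
(x;1)ᵀ Q(F) (x;1) = (x − k(F))ᵀ P(F) (x − k(F)) for every x ∈ ℝ⁴. -/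
theorem quadratic_form_translation (F : Matrix (Fin 3) (Fin 3) ℝ)
    (hdet : F.det = 0) (hinv : IsUnit (F22 F).det) (x : Fin 4 → ℝ) :
    ![x 0, x 1, x 2, x 3, 1] ⬝ᵥ (Qmat F).mulVec ![x 0, x 1, x 2, x 3, 1] =
      (x - kvec F) ⬝ᵥ (Pmat F).mulVec (x - kvec F) := by
  have hd : (F 0 0 * F 1 1 - F 0 1 * F 1 0) ≠ 0 := by
    have := hinv.ne_zero
    simpa [F22, Matrix.det_fin_two] using this
  rw [Matrix.det_fin_three] at hdet
  rw [Pmat_eq, kvec_eq]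
  simp only [Qmat, Matrix.mulVec, dotProduct, Fin.sum_univ_five, Fin.sum_univ_four,
    Matrix.smul_apply, smul_eq_mul, Pi.sub_apply, Matrix.cons_val_zero, Matrix.cons_val_one,
    Matrix.head_cons, Matrix.cons_val_two, Matrix.cons_val_three, Matrix.cons_val_four,
    Matrix.tail_cons, Matrix.cons_val', Matrix.empty_val', Matrix.cons_val_fin_one,
    Matrix.head_fin_const, Matrix.of_apply]
  field_simp
  ring_nf
  linear_combination (norm := ring_nf) (2 * (F 0 0 * F 1 1 - F 0 1 * F 1 0)) * hdet
end
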